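/- arXiv:0801.0261 — 2 statements merged into one kernel-verified Lean document; each statement's English description precedes it below -/
import Mathlib

section
/- Let K be a field and C a K-linear abelian symmetric monoidal category in which, for every object X, the functors X ⊗ − and − ⊗ X are exact (preserve finite limits and finite colimits). Suppose M₁ → M₂ → M₃ → 0 is an exact sequence in C, i.e. M₂ → M₃ is a cokernel of M₁ → M₂. If M₁ and M₂ each admit a dual (an object M^∨ together with coevaluation δ : 𝟙 → M^∨ ⊗ M and evaluation ε : M ⊗ M^∨ → 𝟙 satisfying the two triangle identities), then M₃ also admits a dual. -/
open CategoryTheory CategoryTheory.Limits CategoryTheory.MonoidalCategory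

/-- Lemma 2.18 (lemma:duals): in a `K`-linear abelian symmetric monoidal category
with exact tensor functors, the cokernel of a morphism of dualizable objects is
dualizable: given an exact sequence `M₁ → M₂ → M₃ → 0`, if `M₁` and `M₂` have
duals then so does `M₃`. -/
theorem hasLeftDual_of_exact_sequence
    {K : Type*} [Field K]
    {C : Type*} [Category C] [Abelian C] [Linear K C]
    [MonoidalCategory C] [SymmetricCategory C]
    [MonoidalPreadditive C] [MonoidalLinear K C]
    [∀ X : C, PreservesFiniteLimits (tensorLeft X)]
    [∀ X : C, PreservesFiniteColimits (tensorLeft X)]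
    [∀ X : C, PreservesFiniteLimits (tensorRight X)]
    [∀ X : C, PreservesFiniteColimits (tensorRight X)]
    {M₁ M₂ M₃ : C} (f : M₁ ⟶ M₂) (g : M₂ ⟶ M₃) (w : f ≫ g = 0)
    (hg : Nonempty (IsColimit (CokernelCofork.ofπ g w)))
    [HasLeftDual M₁] [HasLeftDual M₂] :
    Nonempty (HasLeftDual M₃) := by
  obtain ⟨hg⟩ := hg
  have hepi : Epi g := epi_of_isColimit_cofork hg
  let D : C := kernel (ᘁf)
  let ι : D ⟶ (ᘁM₂ : C) := kernel.ι (ᘁf)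
  have hι : ι ≫ (ᘁf) = 0 := kernel.condition _
  -- the whiskered cokernel cofork is a colimit
  have hgD : IsColimit (CokernelCofork.ofπ ((tensorRight D).map g)
      (by rw [← Functor.map_comp, w, Functor.map_zero]) :
        Cofork ((tensorRight D).map f) 0) :=
    isColimitCoforkMapOfIsColimit' (tensorRight D) w hg
  -- the whiskered kernel fork is a limit
  have hK : IsLimit (KernelFork.ofι ((tensorRight M₃).map ι)
      (by rw [← Functor.map_comp, hι, Functor.map_zero]) :
        Fork ((tensorRight M₃).map (ᘁf)) 0) :=
    isLimitForkMapOfIsLimit' (tensorRight M₃) hι (kernelIsKernel (ᘁf))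
  -- evaluation
  have hz : (tensorRight D).map f ≫ (M₂ ◁ ι ≫ ε_ (ᘁM₂) M₂) = 0 := by
    show f ▷ D ≫ (M₂ ◁ ι ≫ ε_ (ᘁM₂) M₂) = 0
    rw [← whisker_exchange_assoc, ← leftAdjointMate_comp_evaluation,
      ← MonoidalCategory.whiskerLeft_comp_assoc, hι]
    simp
  obtain ⟨ε₃, hε₃⟩ := CokernelCofork.IsColimit.desc' hgD (M₂ ◁ ι ≫ ε_ (ᘁM₂) M₂) hz
  have fac_ε : g ▷ D ≫ ε₃ = M₂ ◁ ι ≫ ε_ (ᘁM₂) M₂ := hε₃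
  -- coevaluation
  have hz2 : (η_ (ᘁM₂) M₂ ≫ (ᘁM₂ : C) ◁ g) ≫ (tensorRight M₃).map (leftAdjointMate f) = 0 := by
    show (η_ (ᘁM₂) M₂ ≫ (ᘁM₂ : C) ◁ g) ≫ ((leftAdjointMate f) ▷ M₃) = 0
    rw [Category.assoc, whisker_exchange, coevaluation_comp_leftAdjointMate_assoc,
      ← MonoidalCategory.whiskerLeft_comp, w]
    simp
  obtain ⟨δ₃, hδ₃⟩ := KernelFork.IsLimit.lift' hK (η_ (ᘁM₂) M₂ ≫ (ᘁM₂ : C) ◁ g) hz2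
  have fac_δ : δ₃ ≫ ι ▷ M₃ = η_ (ᘁM₂) M₂ ≫ (ᘁM₂ : C) ◁ g := hδ₃
  refine ⟨@HasLeftDual.mk _ _ _ M₃ D (@ExactPairing.mk _ _ _ D M₃ δ₃ ε₃ ?_ ?_)⟩
  · -- M₃ ◁ δ₃ ≫ (α_ M₃ D M₃).inv ≫ ε₃ ▷ M₃ = (ρ_ M₃).hom ≫ (λ_ M₃).inv
    have hepiw : Epi (g ▷ 𝟙_ C) := by
      have e : g ▷ 𝟙_ C = (ρ_ M₂).hom ≫ g ≫ (ρ_ M₃).inv := by simp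
      rw [e]; infer_instance
    rw [← cancel_epi (g ▷ 𝟙_ C), ← whisker_exchange_assoc,
      associator_inv_naturality_left_assoc]
    calc M₂ ◁ δ₃ ≫ (α_ M₂ D M₃).inv ≫ (g ▷ D) ▷ M₃ ≫ ε₃ ▷ M₃
        = M₂ ◁ δ₃ ≫ (α_ M₂ D M₃).inv ≫ (M₂ ◁ ι) ▷ M₃ ≫ ε_ (ᘁM₂) M₂ ▷ M₃ := by
          rw [← comp_whiskerRight, fac_ε, comp_whiskerRight]
      _ = M₂ ◁ δ₃ ≫ M₂ ◁ (ι ▷ M₃) ≫ (α_ M₂ (ᘁM₂) M₃).inv ≫ ε_ (ᘁM₂) M₂ ▷ M₃ := by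
          rw [associator_inv_naturality_middle_assoc]
      _ = M₂ ◁ η_ (ᘁM₂) M₂ ≫ M₂ ◁ ((ᘁM₂ : C) ◁ g) ≫ (α_ M₂ (ᘁM₂) M₃).inv ≫
            ε_ (ᘁM₂) M₂ ▷ M₃ := by
          rw [← MonoidalCategory.whiskerLeft_comp_assoc, fac_δ, MonoidalCategory.whiskerLeft_comp_assoc]
      _ = M₂ ◁ η_ (ᘁM₂) M₂ ≫ (α_ M₂ (ᘁM₂) M₂).inv ≫ (M₂ ⊗ (ᘁM₂ : C)) ◁ g ≫
            ε_ (ᘁM₂) M₂ ▷ M₃ := by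
          rw [associator_inv_naturality_right_assoc]
      _ = M₂ ◁ η_ (ᘁM₂) M₂ ≫ (α_ M₂ (ᘁM₂) M₂).inv ≫ ε_ (ᘁM₂) M₂ ▷ M₂ ≫ 𝟙_ C ◁ g := by
          rw [whisker_exchange]
      _ = (ρ_ M₂).hom ≫ (λ_ M₂).inv ≫ 𝟙_ C ◁ g := by
          rw [ExactPairing.coevaluation_evaluation_assoc]
      _ = g ▷ 𝟙_ C ≫ (ρ_ M₃).hom ≫ (λ_ M₃).inv := by
          rw [← leftUnitor_inv_naturality]
          simp
  · -- δ₃ ▷ D ≫ (α_ D M₃ D).hom ≫ D ◁ ε₃ = (λ_ D).hom ≫ (ρ_ D).inv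
    have hmono : Mono (ι ▷ 𝟙_ C) := by
      have e : ι ▷ 𝟙_ C = (ρ_ D).hom ≫ ι ≫ (ρ_ (ᘁM₂ : C)).inv := by simp
      rw [e]
      exact mono_comp _ _
    rw [← cancel_mono (ι ▷ 𝟙_ C)]
    simp only [Category.assoc]
    calc δ₃ ▷ D ≫ (α_ D M₃ D).hom ≫ D ◁ ε₃ ≫ ι ▷ 𝟙_ C
        = δ₃ ▷ D ≫ (α_ D M₃ D).hom ≫ ι ▷ (M₃ ⊗ D) ≫ (ᘁM₂ : C) ◁ ε₃ := by
          rw [whisker_exchange]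
      _ = δ₃ ▷ D ≫ (ι ▷ M₃) ▷ D ≫ (α_ (ᘁM₂ : C) M₃ D).hom ≫ (ᘁM₂ : C) ◁ ε₃ := by
          rw [← associator_naturality_left_assoc]
      _ = η_ (ᘁM₂) M₂ ▷ D ≫ ((ᘁM₂ : C) ◁ g) ▷ D ≫ (α_ (ᘁM₂ : C) M₃ D).hom ≫
            (ᘁM₂ : C) ◁ ε₃ := by
          rw [← comp_whiskerRight_assoc, fac_δ, comp_whiskerRight_assoc]
      _ = η_ (ᘁM₂) M₂ ▷ D ≫ (α_ (ᘁM₂ : C) M₂ D).hom ≫ (ᘁM₂ : C) ◁ (g ▷ D) ≫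
            (ᘁM₂ : C) ◁ ε₃ := by
          rw [associator_naturality_middle_assoc]
      _ = η_ (ᘁM₂) M₂ ▷ D ≫ (α_ (ᘁM₂ : C) M₂ D).hom ≫ (ᘁM₂ : C) ◁ (M₂ ◁ ι) ≫
            (ᘁM₂ : C) ◁ ε_ (ᘁM₂) M₂ := by
          rw [← MonoidalCategory.whiskerLeft_comp, fac_ε, MonoidalCategory.whiskerLeft_comp]
      _ = η_ (ᘁM₂) M₂ ▷ D ≫ ((ᘁM₂ : C) ⊗ M₂) ◁ ι ≫ (α_ (ᘁM₂ : C) M₂ (ᘁM₂ : C)).hom ≫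
            (ᘁM₂ : C) ◁ ε_ (ᘁM₂) M₂ := by
          rw [← associator_naturality_right_assoc]
      _ = 𝟙_ C ◁ ι ≫ η_ (ᘁM₂) M₂ ▷ (ᘁM₂ : C) ≫ (α_ (ᘁM₂ : C) M₂ (ᘁM₂ : C)).hom ≫
            (ᘁM₂ : C) ◁ ε_ (ᘁM₂) M₂ := by
          rw [← whisker_exchange_assoc]
      _ = 𝟙_ C ◁ ι ≫ (λ_ (ᘁM₂ : C)).hom ≫ (ρ_ (ᘁM₂ : C)).inv := by
          rw [ExactPairing.evaluation_coevaluation]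
      _ = (λ_ D).hom ≫ (ρ_ D).inv ≫ ι ▷ 𝟙_ C := by
          simp
end

section
/- Let F be a field, and let C and D be categories each possessing an initial object. Let P : C ⥤ ModuleCat F and Q : D ⥤ ModuleCat F be functors which send the initial objects of C and D to zero modules (modules with subsingleton carrier). Define H : C × D ⥤ ModuleCat F on objects by H(c,d) = P.obj c × Q.obj d (the product module) and on morphisms by H(f,g) = P.map f × Q.map g. Then the map End(P) × End(Q) → End(H) sending a pair of natural transformations (α, β) to the natural transformation with components α.app c × β.app d is a bijection (and a ring isomorphism). -/
open CategoryTheory CategoryTheory.Limits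

set_option synthInstance.maxHeartbeats 800000
set_option maxHeartbeats 1600000

variable {F : Type*} [Field F] {C D : Type*} [Category C] [Category D]

/-- The "product" functor `H : C × D ⥤ ModuleCat F` with `H(c,d) = P(c) × Q(d)`. -/
@[simps]
def prodModuleFunctor (P : C ⥤ ModuleCat F) (Q : D ⥤ ModuleCat F) :
    C × D ⥤ ModuleCat F where
  obj cd := ModuleCat.of F (P.obj cd.1 × Q.obj cd.2)
  map fg := ModuleCat.ofHom (LinearMap.prodMap (P.map fg.1).hom (Q.map fg.2).hom)
  map_id cd := by
    show ModuleCat.ofHom (LinearMap.prodMap (P.map (𝟙 cd.1)).hom (Q.map (𝟙 cd.2)).hom) = _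
    simp only [CategoryTheory.Functor.map_id]
    rfl
  map_comp f g := by
    show ModuleCat.ofHom (LinearMap.prodMap (P.map (f.1 ≫ g.1)).hom (Q.map (f.2 ≫ g.2)).hom) = _
    simp only [CategoryTheory.Functor.map_comp]
    rfl

/-- The natural endomorphism of `prodModuleFunctor P Q` with components
`α.app c × β.app d`, for `α : End P` and `β : End Q`. -/
@[simps]
def prodEndMap (P : C ⥤ ModuleCat F) (Q : D ⥤ ModuleCat F)
    (αβ : End P × End Q) : End (prodModuleFunctor P Q) where
  app cd := ModuleCat.ofHom (LinearMap.prodMap (αβ.1.app cd.1).hom (αβ.2.app cd.2).hom)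
  naturality cd cd' fg := by
    apply ModuleCat.hom_ext
    apply LinearMap.ext
    intro x
    have h1 := LinearMap.congr_fun (congr_arg ModuleCat.Hom.hom (αβ.1.naturality fg.1))
      (x : (P.obj cd.1 : Type _) × Q.obj cd.2).1
    have h2 := LinearMap.congr_fun (congr_arg ModuleCat.Hom.hom (αβ.2.naturality fg.2))
      (x : (P.obj cd.1 : Type _) × Q.obj cd.2).2
    exact Prod.ext h1 h2

section Aux

variable (P : C ⥤ ModuleCat F) (Q : D ⥤ ModuleCat F)

lemma key1 [HasInitial D] (hQ : Subsingleton (Q.obj (⊥_ D)))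
    (γ : End (prodModuleFunctor P Q)) (c : C) (d : D) (x : P.obj c) :
    γ.app (c, d) ((x, 0) : ↑(P.obj c) × ↑(Q.obj d)) =
      (((γ.app (c, ⊥_ D) ((x, 0) : ↑(P.obj c) × ↑(Q.obj (⊥_ D))) : ↑(P.obj c) × ↑(Q.obj (⊥_ D)))).1, 0) := by
  have h := LinearMap.congr_fun (congr_arg ModuleCat.Hom.hom
    (γ.naturality ((𝟙 c, initial.to d) : ((c, ⊥_ D) : C × D) ⟶ (c, d))))
    ((x, (0 : Q.obj (⊥_ D))) : ↑(P.obj c) × ↑(Q.obj (⊥_ D)))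
  have hzero : ∀ z : Q.obj (⊥_ D), Q.map (initial.to d) z = 0 := by
    intro z
    rw [Subsingleton.elim z (0 : Q.obj (⊥_ D))]
    exact (Q.map (initial.to d)).hom.map_zero
  have hx : (prodModuleFunctor P Q).map ((𝟙 c, initial.to d) : ((c, ⊥_ D) : C × D) ⟶ (c, d))
      (x, 0) = ((x, 0) : ↑(P.obj c) × ↑(Q.obj d)) := by
    refine Prod.ext ?_ ?_
    · show P.map (𝟙 c) x = x
      rw [CategoryTheory.Functor.map_id]; rfl
    · show Q.map (initial.to d) _ = 0
      exact hzero _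
  calc (γ.app (c, d) ((x, 0) : ↑(P.obj c) × ↑(Q.obj d)) : ↑(P.obj c) × ↑(Q.obj d))
      = (γ.app (c, d) ((prodModuleFunctor P Q).map
          ((𝟙 c, initial.to d) : ((c, ⊥_ D) : C × D) ⟶ (c, d)) (x, 0)) : ↑(P.obj c) × ↑(Q.obj d)) := congrArg _ hx.symm
    _ = ((prodModuleFunctor P Q).map ((𝟙 c, initial.to d) : ((c, ⊥_ D) : C × D) ⟶ (c, d))
          (γ.app (c, ⊥_ D) (x, 0)) : ↑(P.obj c) × ↑(Q.obj d)) := h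
    _ = @id ↑((prodModuleFunctor P Q).obj (c, d))
          (((γ.app (c, ⊥_ D) ((x, 0) : ↑(P.obj c) × ↑(Q.obj (⊥_ D))) : ↑(P.obj c) × ↑(Q.obj (⊥_ D)))).1, 0) := by
        refine Prod.ext ?_ ?_
        · show P.map (𝟙 c) _ = _
          rw [CategoryTheory.Functor.map_id]; rfl
        · show Q.map (initial.to d) _ = 0
          exact hzero _

lemma key2 [HasInitial C] (hP : Subsingleton (P.obj (⊥_ C)))
    (γ : End (prodModuleFunctor P Q)) (c : C) (d : D) (y : Q.obj d) :
    γ.app (c, d) ((0, y) : ↑(P.obj c) × ↑(Q.obj d)) =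
      (0, ((γ.app (⊥_ C, d) ((0, y) : ↑(P.obj (⊥_ C)) × ↑(Q.obj d)) : ↑(P.obj (⊥_ C)) × ↑(Q.obj d))).2) := by
  have h := LinearMap.congr_fun (congr_arg ModuleCat.Hom.hom
    (γ.naturality ((initial.to c, 𝟙 d) : ((⊥_ C, d) : C × D) ⟶ (c, d))))
    (((0 : P.obj (⊥_ C)), y) : ↑(P.obj (⊥_ C)) × ↑(Q.obj d))
  have hzero : ∀ z : P.obj (⊥_ C), P.map (initial.to c) z = 0 := by
    intro z
    rw [Subsingleton.elim z (0 : P.obj (⊥_ C))]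
    exact (P.map (initial.to c)).hom.map_zero
  have hy : (prodModuleFunctor P Q).map ((initial.to c, 𝟙 d) : ((⊥_ C, d) : C × D) ⟶ (c, d))
      (0, y) = ((0, y) : ↑(P.obj c) × ↑(Q.obj d)) := by
    refine Prod.ext ?_ ?_
    · show P.map (initial.to c) _ = 0
      exact hzero _
    · show Q.map (𝟙 d) y = y
      rw [CategoryTheory.Functor.map_id]; rfl
  calc (γ.app (c, d) ((0, y) : ↑(P.obj c) × ↑(Q.obj d)) : ↑(P.obj c) × ↑(Q.obj d))
      = (γ.app (c, d) ((prodModuleFunctor P Q).map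
          ((initial.to c, 𝟙 d) : ((⊥_ C, d) : C × D) ⟶ (c, d)) (0, y)) : ↑(P.obj c) × ↑(Q.obj d)) := congrArg _ hy.symm
    _ = ((prodModuleFunctor P Q).map ((initial.to c, 𝟙 d) : ((⊥_ C, d) : C × D) ⟶ (c, d))
          (γ.app (⊥_ C, d) (0, y)) : ↑(P.obj c) × ↑(Q.obj d)) := h
    _ = @id ↑((prodModuleFunctor P Q).obj (c, d))
          (0, ((γ.app (⊥_ C, d) ((0, y) : ↑(P.obj (⊥_ C)) × ↑(Q.obj d)) : ↑(P.obj (⊥_ C)) × ↑(Q.obj d))).2) := by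
        refine Prod.ext ?_ ?_
        · show P.map (initial.to c) _ = 0
          exact hzero _
        · show Q.map (𝟙 d) _ = _
          rw [CategoryTheory.Functor.map_id]; rfl

/-- Left component of an endomorphism of the product functor. -/
@[simps]
noncomputable def leftEnd [HasInitial D] (γ : End (prodModuleFunctor P Q)) : End P where
  app c := ModuleCat.ofHom (LinearMap.fst F _ _ ∘ₗ (γ.app (c, ⊥_ D)).hom ∘ₗ LinearMap.inl F _ _)
  naturality c c' f := by
    ext x
    have h := LinearMap.congr_fun (congr_arg ModuleCat.Hom.hom
      (γ.naturality ((f, 𝟙 (⊥_ D)) : ((c, ⊥_ D) : C × D) ⟶ (c', ⊥_ D))))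
      ((x, (0 : Q.obj (⊥_ D))) : ↑(P.obj c) × ↑(Q.obj (⊥_ D)))
    simp only [prodModuleFunctor_map, ModuleCat.hom_comp, ModuleCat.hom_ofHom, LinearMap.comp_apply,
      LinearMap.prodMap_apply, CategoryTheory.Functor.map_id, ModuleCat.hom_id, LinearMap.id_apply,
      map_zero, LinearMap.fst_apply, LinearMap.inl_apply] at h ⊢
    exact congrArg Prod.fst h

/-- Right component of an endomorphism of the product functor. -/
@[simps]
noncomputable def rightEnd [HasInitial C] (γ : End (prodModuleFunctor P Q)) : End Q where
  app d := ModuleCat.ofHom (LinearMap.snd F _ _ ∘ₗ (γ.app (⊥_ C, d)).hom ∘ₗ LinearMap.inr F _ _)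
  naturality d d' g := by
    ext y
    have h := LinearMap.congr_fun (congr_arg ModuleCat.Hom.hom
      (γ.naturality ((𝟙 (⊥_ C), g) : ((⊥_ C, d) : C × D) ⟶ (⊥_ C, d'))))
      (((0 : P.obj (⊥_ C)), y) : ↑(P.obj (⊥_ C)) × ↑(Q.obj d))
    simp only [prodModuleFunctor_map, ModuleCat.hom_comp, ModuleCat.hom_ofHom, LinearMap.comp_apply,
      LinearMap.prodMap_apply, CategoryTheory.Functor.map_id, ModuleCat.hom_id, LinearMap.id_apply,
      map_zero, LinearMap.snd_apply, LinearMap.inr_apply] at h ⊢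
    exact congrArg Prod.snd h

end Aux

/-- Dual form of Lemma 2.12 (lemma:productcomod): if `P` and `Q` send the initial
objects of `C` and `D` to zero modules, then
`End(P) × End(Q) → End(P × Q)`, `(α, β) ↦ α × β`, is a bijection (and a ring
isomorphism). -/
theorem prodEndMap_bijective
    [HasInitial C] [HasInitial D]
    (P : C ⥤ ModuleCat F) (Q : D ⥤ ModuleCat F)
    (hP : Subsingleton (P.obj (⊥_ C))) (hQ : Subsingleton (Q.obj (⊥_ D))) :
    Function.Bijective (prodEndMap P Q)
      ∧ prodEndMap P Q 1 = 1
      ∧ (∀ a b : End P × End Q, prodEndMap P Q (a * b) = prodEndMap P Q a * prodEndMap P Q b)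
      ∧ (∀ a b : End P × End Q, prodEndMap P Q (a + b) = prodEndMap P Q a + prodEndMap P Q b) := by
  refine ⟨⟨?_, ?_⟩, ?_, ?_, ?_⟩
  · -- injective
    intro a b h
    have happ : ∀ cd, (prodEndMap P Q a).app cd = (prodEndMap P Q b).app cd := by
      intro cd; rw [h]
    refine Prod.ext ?_ ?_
    · refine NatTrans.ext (funext fun c => ModuleCat.hom_ext (LinearMap.ext fun x => ?_))
      have := LinearMap.congr_fun (congr_arg ModuleCat.Hom.hom (happ (c, ⊥_ D)))
        ((x, 0) : ↑(P.obj c) × ↑(Q.obj (⊥_ D)))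
      exact congrArg Prod.fst this
    · refine NatTrans.ext (funext fun d => ModuleCat.hom_ext (LinearMap.ext fun y => ?_))
      have := LinearMap.congr_fun (congr_arg ModuleCat.Hom.hom (happ (⊥_ C, d)))
        ((0, y) : ↑(P.obj (⊥_ C)) × ↑(Q.obj d))
      exact congrArg Prod.snd this
  · -- surjective
    intro γ
    refine ⟨(leftEnd P Q γ, rightEnd P Q γ), ?_⟩
    refine NatTrans.ext (funext fun cd => ModuleCat.hom_ext (LinearMap.ext fun xy => ?_))
    obtain ⟨c, d⟩ := cd
    obtain ⟨x, y⟩ := xy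
    calc ((prodEndMap P Q (leftEnd P Q γ, rightEnd P Q γ)).app (c, d) ((x, y) : ↑(P.obj c) × ↑(Q.obj d)) : ↑(P.obj c) × ↑(Q.obj d))
        = @id ↑((prodModuleFunctor P Q).obj (c, d)) (((γ.app (c, ⊥_ D) ((x, 0) : ↑(P.obj c) × ↑(Q.obj (⊥_ D))) : ↑(P.obj c) × ↑(Q.obj (⊥_ D)))).1,
            ((γ.app (⊥_ C, d) ((0, y) : ↑(P.obj (⊥_ C)) × ↑(Q.obj d)) : ↑(P.obj (⊥_ C)) × ↑(Q.obj d))).2) := rfl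
      _ = (γ.app (c, d) ((x, 0) : ↑(P.obj c) × ↑(Q.obj d)) : ↑(P.obj c) × ↑(Q.obj d))
            + (γ.app (c, d) ((0, y) : ↑(P.obj c) × ↑(Q.obj d)) : ↑(P.obj c) × ↑(Q.obj d)) := by
          conv_rhs => rw [key1 P Q hQ γ c d x, key2 P Q hP γ c d y]
          exact Prod.ext (add_zero _).symm (zero_add _).symm
      _ = (γ.app (c, d) ((x, y) : ↑(P.obj c) × ↑(Q.obj d)) : ↑(P.obj c) × ↑(Q.obj d)) := by
          have hxy : ((x, y) : ↑(P.obj c) × ↑(Q.obj d)) = (x, 0) + (0, y) :=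
            Prod.ext (add_zero x).symm (zero_add y).symm
          conv_rhs => rw [hxy]
          exact (map_add (γ.app (c, d)).hom _ _).symm
  · -- one
    refine NatTrans.ext (funext fun cd => ModuleCat.hom_ext (LinearMap.ext fun xy => ?_))
    rfl
  · -- mul
    intro a b
    refine NatTrans.ext (funext fun cd => ModuleCat.hom_ext (LinearMap.ext fun xy => ?_))
    rfl
  · -- add
    intro a b
    refine NatTrans.ext (funext fun cd => ModuleCat.hom_ext (LinearMap.ext fun xy => ?_))
    simp only [prodEndMap_app, NatTrans.app_add, LinearMap.add_apply,
      LinearMap.prodMap_apply, Prod.fst_add, Prod.snd_add]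
    rfl
end
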